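/- arXiv:1008.0903 — 8 statements merged into one kernel-verified Lean document; each statement's English description precedes it below -/
import Mathlib

section
/- In the setting where F : B → B is a conditional expectation with range A, β an action of G on B with FF_t = F_tF for all t (F_t = β_tFβ_{t⁻¹}), and V_t = Fβ_t|_A, the range of V_t equals A ∩ β_t(A) for every t ∈ G. -/
variable {B : Type*} [NormedRing B] [StarRing B] [CStarRing B] [NormedAlgebra ℂ B]
  [CompleteSpace B] [PartialOrder B] [StarOrderedRing B]

/-- `F` is a conditional expectation of `B` onto the subset `A`. -/
def IsCondExpOnto (F : B →L[ℂ] B) (A : Set B) : Prop :=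
  (∀ b : B, 0 ≤ b → 0 ≤ F b) ∧ (∀ b : B, F (F b) = F b) ∧ Set.range F = A ∧
    ∀ a ∈ A, ∀ b : B, F (a * b) = a * F b ∧ F (b * a) = F b * a

/-- With `F` a conditional expectation onto `A`, `β` an action of `G` on `B`, and
`F_t := β_t F β_{t⁻¹}` commuting with `F` for every `t`, the range of `V_t = F ∘ β_t |_A`
equals `A ∩ β_t(A)` for every `t ∈ G`. -/
theorem range_of_V_eq (G : Type*) [Group G]
    (F : B →L[ℂ] B) (A : Set B) (hF : IsCondExpOnto F A)
    (β : G → B ≃⋆ₐ[ℂ] B)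
    (hβ1 : ∀ b : B, β 1 b = b)
    (hβmul : ∀ (s t : G) (b : B), β (s * t) b = β s (β t b))
    (hcomm : ∀ (t : G) (b : B), F (β t (F ((β t).symm b))) = β t (F ((β t).symm (F b)))) :
    ∀ t : G, (fun a => F (β t a)) '' A = A ∩ (β t '' A) := by
  obtain ⟨hpos, hidem, hrange, hmod⟩ := hF
  have hfix : ∀ a ∈ A, F a = a := by
    intro a ha
    rw [← hrange] at ha
    obtain ⟨b, rfl⟩ := ha
    exact hidem b
  intro t
  ext x
  constructor
  · rintro ⟨a, ha, rfl⟩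
    refine ⟨by rw [← hrange]; exact ⟨β t a, rfl⟩, ?_⟩
    have h := hcomm t (β t a)
    rw [(β t).symm_apply_apply, hfix a ha] at h
    exact ⟨F ((β t).symm (F (β t a))), by rw [← hrange]; exact ⟨_, rfl⟩, h.symm⟩
  · rintro ⟨hxA, a, ha, rfl⟩
    exact ⟨a, ha, hfix _ hxA⟩
end

section
/- In the setting of an action β of G on B and a conditional expectation F onto A with FF_t = F_tF for all t, the map V defined by V_t = Fβ_t|_A is an interaction group if and only if F(β_t(1_A)) = 1_A for all t ∈ G. -/
variable {B : Type*} [NormedRing B] [StarRing B] [CStarRing B] [NormedAlgebra ℂ B]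
  [CompleteSpace B] [PartialOrder B] [StarOrderedRing B]

/-- `V` is an interaction group of `G` on the unital C*-subalgebra `A` (with unit `oneA`):
a partial representation on `A` by positive maps fixing the unit, which is multiplicative
whenever one of the factors lies in the range of `V_{t⁻¹}`. -/
def IsInteractionGroupOn {G : Type*} [Group G] (V : G → B → B) (A : Set B) (oneA : B) :
    Prop :=
  (∀ t : G, ∀ a ∈ A, V t a ∈ A) ∧
  (∀ a ∈ A, V 1 a = a) ∧
  (∀ s t : G, ∀ a ∈ A, V s⁻¹ (V s (V t a)) = V s⁻¹ (V (s * t) a)) ∧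
  (∀ s t : G, ∀ a ∈ A, V s (V t (V t⁻¹ a)) = V (s * t) (V t⁻¹ a)) ∧
  (∀ t : G, ∀ a ∈ A, 0 ≤ a → 0 ≤ V t a) ∧
  (∀ t : G, V t oneA = oneA) ∧
  (∀ t : G, ∀ a ∈ A, ∀ b ∈ A,
    ((∃ c ∈ A, a = V t⁻¹ c) ∨ (∃ c ∈ A, b = V t⁻¹ c)) → V t (a * b) = V t a * V t b)

/-!
Write `V_t = F β_t` and `F_t = β_t F β_{t⁻¹}`. Unitality of `V` is part of the definition of an
interaction group, so only the converse needs an argument, and it rests on two identities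
derived from `F F_t = F_t F`: on `A` one has `V_t V_{t⁻¹} = F_t` and `F_t(A) ⊆ A`, and on `B`
one has `V_t F = F_t V_t`. The partial-representation laws follow by moving `F` past `β_t`
with these, and multiplicativity holds because a factor `V_{t⁻¹}(c)` is sent by `β_t` to
`F_t(c) ∈ A`, which `F` pulls out of the product as an `A`-bimodule map.
-/

namespace IsCondExpOnto

variable {R : Type*} [NormedRing R] [NormedAlgebra ℂ R] [PartialOrder R] {F : R →L[ℂ] R}
  {A : Set R}

lemma apply_mem (hF : IsCondExpOnto F A) (b : R) : F b ∈ A :=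
  hF.2.2.1 ▸ ⟨b, rfl⟩

lemma apply_apply (hF : IsCondExpOnto F A) (b : R) : F (F b) = F b :=
  hF.2.1 b

lemma apply_of_mem (hF : IsCondExpOnto F A) {a : R} (ha : a ∈ A) : F a = a := by
  obtain ⟨b, rfl⟩ := hF.2.2.1.symm ▸ ha
  exact hF.apply_apply b

lemma map_nonneg (hF : IsCondExpOnto F A) {b : R} (hb : 0 ≤ b) : 0 ≤ F b :=
  hF.1 b hb

lemma map_mul_left (hF : IsCondExpOnto F A) {a : R} (ha : a ∈ A) (b : R) :
    F (a * b) = a * F b :=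
  (hF.2.2.2 a ha b).1

lemma map_mul_right (hF : IsCondExpOnto F A) {a : R} (ha : a ∈ A) (b : R) :
    F (b * a) = F b * a :=
  (hF.2.2.2 a ha b).2

end IsCondExpOnto

section Action

variable {G α E : Type*} [Group G] [EquivLike E α α] {β : G → E}

lemma apply_one_of_apply_mul (hβ : ∀ (s t : G) (x : α), β (s * t) x = β s (β t x)) (x : α) :
    β 1 x = x :=
  EquivLike.injective (β 1) (by rw [← hβ, one_mul])

lemma apply_inv_apply_of_apply_mul (hβ : ∀ (s t : G) (x : α), β (s * t) x = β s (β t x))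
    (t : G) (x : α) : β t⁻¹ (β t x) = x := by
  rw [← hβ, inv_mul_cancel, apply_one_of_apply_mul hβ]

end Action

lemma StarAlgEquiv.symm_apply_eq_inv_apply {G R : Type*} [Group G] [Add R] [Mul R] [SMul ℂ R]
    [Star R] {β : G → R ≃⋆ₐ[ℂ] R} (hβ : ∀ (s t : G) (x : R), β (s * t) x = β s (β t x))
    (t : G) (x : R) : (β t).symm x = β t⁻¹ x := by
  rw [StarAlgEquiv.symm_apply_eq]
  simpa only [inv_inv] using (apply_inv_apply_of_apply_mul hβ t⁻¹ x).symm

def CommutesWithConjugates {G α E : Type*} [Group G] [FunLike E α α] (F : α → α) (β : G → E) :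
    Prop :=
  ∀ (t : G) (x : α), F (β t (F (β t⁻¹ x))) = β t (F (β t⁻¹ (F x)))

lemma commutesWithConjugates_of_symm {G R : Type*} [Group G] [Add R] [Mul R] [SMul ℂ R] [Star R]
    {F : R → R} {β : G → R ≃⋆ₐ[ℂ] R} (hβ : ∀ (s t : G) (x : R), β (s * t) x = β s (β t x))
    (hcomm : ∀ (t : G) (x : R), F (β t (F ((β t).symm x))) = β t (F ((β t).symm (F x)))) :
    CommutesWithConjugates F β := fun t x => by
  simpa only [StarAlgEquiv.symm_apply_eq_inv_apply hβ] using hcomm t x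

lemma CommutesWithConjugates.apply_apply_apply {G α E : Type*} [Group G] [EquivLike E α α]
    {F : α → α} {β : G → E} (hcomm : CommutesWithConjugates F β)
    (hβ : ∀ (s t : G) (x : α), β (s * t) x = β s (β t x)) (t : G) (x : α) :
    F (β t (F x)) = β t (F (β t⁻¹ (F (β t x)))) := by
  simpa only [apply_inv_apply_of_apply_mul hβ] using hcomm t (β t x)

section ConditionalExpectationAction

variable {G R : Type*} [Group G] [NormedRing R] [StarRing R] [NormedAlgebra ℂ R] [PartialOrder R]
  {F : R →L[ℂ] R} {A : Set R} {β : G → R ≃⋆ₐ[ℂ] R}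

lemma condExp_apply_condExp_conj_of_mem (hF : IsCondExpOnto F A)
    (hcomm : CommutesWithConjugates F β) (t : G) {c : R} (hc : c ∈ A) :
    F (β t (F (β t⁻¹ c))) = β t (F (β t⁻¹ c)) := by
  rw [hcomm, hF.apply_of_mem hc]

lemma condExp_inv_apply_apply_condExp_apply (hF : IsCondExpOnto F A)
    (hcomm : CommutesWithConjugates F β) (hβ : ∀ (s t : G) (x : R), β (s * t) x = β s (β t x))
    (s t : G) (a : R) :
    F (β s⁻¹ (F (β s (F (β t a))))) = F (β s⁻¹ (F (β (s * t) a))) := by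
  rw [hcomm.apply_apply_apply hβ s (β t a), apply_inv_apply_of_apply_mul hβ, hF.apply_apply,
    hβ]

lemma condExp_apply_condExp_apply_inv_of_mem (hF : IsCondExpOnto F A)
    (hcomm : CommutesWithConjugates F β) (hβ : ∀ (s t : G) (x : R), β (s * t) x = β s (β t x))
    (s t : G) {a : R} (ha : a ∈ A) :
    F (β s (F (β t (F (β t⁻¹ a))))) = F (β (s * t) (F (β t⁻¹ a))) := by
  rw [condExp_apply_condExp_conj_of_mem hF hcomm t ha, hβ]

lemma condExp_apply_mul_of_left_mem (hF : IsCondExpOnto F A)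
    (hcomm : CommutesWithConjugates F β) (t : G) {c : R} (hc : c ∈ A) (b : R) :
    F (β t (F (β t⁻¹ c) * b)) = F (β t (F (β t⁻¹ c))) * F (β t b) := by
  have hfix := condExp_apply_condExp_conj_of_mem hF hcomm t hc
  rw [map_mul, hF.map_mul_left (hfix ▸ hF.apply_mem _), hfix]

lemma condExp_apply_mul_of_right_mem (hF : IsCondExpOnto F A)
    (hcomm : CommutesWithConjugates F β) (t : G) {c : R} (hc : c ∈ A) (b : R) :
    F (β t (b * F (β t⁻¹ c))) = F (β t b) * F (β t (F (β t⁻¹ c))) := by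
  have hfix := condExp_apply_condExp_conj_of_mem hF hcomm t hc
  rw [map_mul, hF.map_mul_right (hfix ▸ hF.apply_mem _), hfix]

end ConditionalExpectationAction

theorem interaction_group_iff_unital_general (G : Type*) [Group G]
    (F : B →L[ℂ] B) (A : Set B) (hF : IsCondExpOnto F A)
    (β : G → B ≃⋆ₐ[ℂ] B)
    (hβmul : ∀ (s t : G) (b : B), β (s * t) b = β s (β t b))
    (hcomm : ∀ (t : G) (b : B), F (β t (F ((β t).symm b))) = β t (F ((β t).symm (F b))))
    (V : G → B → B) (hV : ∀ (t : G) (b : B), V t b = F (β t b)) :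
    IsInteractionGroupOn V A (F 1) ↔ ∀ t : G, F (β t (F 1)) = F 1 := by
  have hcomm' := commutesWithConjugates_of_symm hβmul hcomm
  obtain rfl : V = fun t b => F (β t b) := funext₂ hV
  refine ⟨fun hIG t => hIG.2.2.2.2.2.1 t, fun hunital => ⟨?_, ?_, ?_, ?_, ?_, hunital, ?_⟩⟩
  · exact fun t a _ => hF.apply_mem _
  · exact fun a ha => by simp only [apply_one_of_apply_mul hβmul, hF.apply_of_mem ha]
  · exact fun s t a _ => condExp_inv_apply_apply_condExp_apply hF hcomm' hβmul s t a
  · exact fun s t a ha => condExp_apply_condExp_apply_inv_of_mem hF hcomm' hβmul s t ha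
  · exact fun t a _ ha => hF.map_nonneg (map_nonneg (β t) ha)
  · rintro t a - b - (⟨c, hc, rfl⟩ | ⟨c, hc, rfl⟩)
    · exact condExp_apply_mul_of_left_mem hF hcomm' t hc b
    · exact condExp_apply_mul_of_right_mem hF hcomm' t hc a

/-- With `F` a conditional expectation onto `A` (whose unit is `F 1`), `β` an action of
`G` on `B`, and `F_t := β_t F β_{t⁻¹}` commuting with `F` for every `t`, the map
`V_t := F ∘ β_t |_A` is an interaction group if and only if `F(β_t(1_A)) = 1_A` for all
`t ∈ G`. -/
theorem interaction_group_iff_unital (G : Type*) [Group G]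
    (F : B →L[ℂ] B) (A : Set B) (hF : IsCondExpOnto F A)
    (β : G → B ≃⋆ₐ[ℂ] B)
    (hβ1 : ∀ b : B, β 1 b = b)
    (hβmul : ∀ (s t : G) (b : B), β (s * t) b = β s (β t b))
    (hcomm : ∀ (t : G) (b : B), F (β t (F ((β t).symm b))) = β t (F ((β t).symm (F b))))
    (V : G → B → B) (hV : ∀ (t : G) (b : B), V t b = F (β t b)) :
    IsInteractionGroupOn V A (F 1) ↔ ∀ t : G, F (β t (F 1)) = F 1 :=
  interaction_group_iff_unital_general G F A hF β hβmul hcomm V hV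
end

section
/- Let V : G → B(A) be an interaction group and E_t := V_tV_{t⁻¹}. Then each E_t is a conditional expectation of A onto A_t := V_t(A): it is idempotent, positive, unital, and satisfies E_t(ab) = aE_t(b) for all a ∈ A_t, b ∈ A. -/
/-- Let `V : G → B(A)` be an interaction group on a unital C*-algebra `A` and set
`E_t := V_t V_{t⁻¹}`.  Then each `E_t` is a conditional expectation of `A` onto
`A_t := V_t(A)`: it is idempotent, positive, unital, its range is `A_t`, and
`E_t(ab) = a E_t(b)` for all `a ∈ A_t`, `b ∈ A`. -/
theorem interaction_group_conditional_expectation (G : Type*) [Group G] (A : Type*)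
    [NormedRing A] [StarRing A] [CStarRing A] [NormedAlgebra ℂ A] [CompleteSpace A]
    [PartialOrder A] [StarOrderedRing A]
    (V : G → A →L[ℂ] A)
    (hV1 : V 1 = ContinuousLinearMap.id ℂ A)
    (hV2 : ∀ s t : G, V s⁻¹ ∘L V s ∘L V t = V s⁻¹ ∘L V (s * t))
    (hV3 : ∀ s t : G, V s ∘L V t ∘L V t⁻¹ = V (s * t) ∘L V t⁻¹)
    (hpos : ∀ (t : G) (a : A), 0 ≤ a → 0 ≤ V t a)
    (hunit : ∀ t : G, V t 1 = 1)
    (hmul : ∀ (t : G) (a b : A),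
      (a ∈ Set.range (V t⁻¹) ∨ b ∈ Set.range (V t⁻¹)) → V t (a * b) = V t a * V t b) :
    ∀ t : G,
      (∀ b : A, V t (V t⁻¹ (V t (V t⁻¹ b))) = V t (V t⁻¹ b)) ∧
      (∀ b : A, 0 ≤ b → 0 ≤ V t (V t⁻¹ b)) ∧
      (V t (V t⁻¹ 1) = 1) ∧
      (Set.range (fun b => V t (V t⁻¹ b)) = Set.range (V t)) ∧
      (∀ a ∈ Set.range (V t), ∀ b : A, V t (V t⁻¹ (a * b)) = a * V t (V t⁻¹ b)) := by
  -- Key identity: V t (V t⁻¹ (V t x)) = V t x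
  have key : ∀ (t : G) (x : A), V t (V t⁻¹ (V t x)) = V t x := by
    intro t x
    have h := congrArg (fun f => f x) (hV2 t⁻¹ t)
    simp only [inv_inv, inv_mul_cancel, hV1, ContinuousLinearMap.comp_apply,
      ContinuousLinearMap.id_apply] at h
    exact h
  intro t
  refine ⟨?_, ?_, ?_, ?_, ?_⟩
  · intro b
    have := key t⁻¹ b
    rw [inv_inv] at this
    rw [this]
  · intro b hb
    exact hpos t _ (hpos t⁻¹ b hb)
  · rw [hunit t⁻¹, hunit t]
  · ext x
    constructor
    · rintro ⟨b, rfl⟩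
      exact ⟨V t⁻¹ b, rfl⟩
    · rintro ⟨b, rfl⟩
      exact ⟨V t b, key t b⟩
  · rintro a ⟨x, rfl⟩ b
    have h1 : V t⁻¹ (V t x * b) = V t⁻¹ (V t x) * V t⁻¹ b := by
      apply hmul t⁻¹
      left
      rw [inv_inv]
      exact ⟨x, rfl⟩
    rw [h1]
    have h2 : V t (V t⁻¹ (V t x) * V t⁻¹ b) = V t (V t⁻¹ (V t x)) * V t (V t⁻¹ b) :=
      hmul t _ _ (Or.inl ⟨V t x, rfl⟩)
    rw [h2, key t x]
end

section
/- Let (i,(B,β,F)) be a dilation of an interaction group V : G → B(A) with i : A → B the inclusion of a C*-subalgebra. Then for all t ∈ G and a ∈ A: a ∈ A ∩ β_{t⁻¹}(A) implies β_t(a) = V_t(a), and consequently A ∩ β_t(A) ⊆ V_t(A) and the partial action γ associated to V extends the restriction of β to A. -/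
variable {B : Type*} [NormedRing B] [StarRing B] [CStarRing B] [NormedAlgebra ℂ B]
  [CompleteSpace B] [PartialOrder B] [StarOrderedRing B]

/-- Let `(i, (B, β, F))` be a dilation of an interaction group `V : G → B(A)`, with
`i : A → B` the inclusion of the C*-subalgebra `A = F(B)` of `B`.  Then for all `t ∈ G`
and `a ∈ A`:  `a ∈ A ∩ β_{t⁻¹}(A)` implies `β_t(a) = V_t(a)`;  consequently
`A ∩ β_t(A) ⊆ V_t(A)` and the partial action `γ` associated to `V` (with `γ_t = V_t` on
`A_{t⁻¹} = V_{t⁻¹}(A)`) extends the restriction of `β` to `A`. -/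
theorem dilation_extends_restriction (G : Type*) [Group G]
    (F : B →L[ℂ] B) (A : Set B) (hF : IsCondExpOnto F A)
    (β : G → B ≃⋆ₐ[ℂ] B)
    (hβ1 : ∀ b : B, β 1 b = b)
    (hβmul : ∀ (s t : G) (b : B), β (s * t) b = β s (β t b))
    (V : G → B → B) (hVA : ∀ t : G, ∀ a ∈ A, V t a ∈ A)
    -- the dilation condition `i ∘ V_t = F ∘ β_t ∘ i`:
    (hdil : ∀ t : G, ∀ a ∈ A, V t a = F (β t a)) :
    -- `a ∈ A ∩ β_{t⁻¹}(A)` implies `β_t a = V_t a`: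
    (∀ t : G, ∀ a ∈ A ∩ (β t⁻¹ '' A), β t a = V t a) ∧
    -- hence `A ∩ β_t(A) ⊆ V_t(A)`:
    (∀ t : G, A ∩ (β t '' A) ⊆ V t '' A) ∧
    -- and `γ` extends the restriction `β|_A`: on `A ∩ β_{t⁻¹}(A)` the maps agree and
    -- the domain is contained in the domain `V_{t⁻¹}(A)` of `γ_t`:
    (∀ t : G, ∀ a ∈ A ∩ (β t⁻¹ '' A), a ∈ V t⁻¹ '' A ∧ V t a = β t a) := by
  obtain ⟨-, hidem, hrange, -⟩ := hF
  have hfix : ∀ a ∈ A, F a = a := by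
    intro a ha
    rw [← hrange] at ha
    obtain ⟨b, rfl⟩ := ha
    exact hidem b
  have hinv : ∀ (t : G) (b : B), β t (β t⁻¹ b) = b := fun t b => by
    rw [← hβmul, mul_inv_cancel, hβ1]
  have key : ∀ t : G, ∀ a ∈ A ∩ (β t⁻¹ '' A), β t a = V t a := by
    rintro t a ⟨ha, a', ha', rfl⟩
    rw [hdil t _ ha, hinv, hfix _ ha']
  refine ⟨key, ?_, ?_⟩
  · rintro t x ⟨hx, a, ha, rfl⟩
    have ha2 : β t⁻¹ (β t a) ∈ A ∩ (β t⁻¹ '' A) := by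
      refine ⟨?_, β t a, hx, rfl⟩
      rw [← hβmul, inv_mul_cancel, hβ1]; exact ha
    refine ⟨β t⁻¹ (β t a), ha2.1, ?_⟩
    rw [← key t _ ha2, hinv]
  · rintro t a ⟨ha, a', ha', rfl⟩
    refine ⟨⟨a', ha', ?_⟩, (key t _ ⟨ha, a', ha', rfl⟩).symm⟩
    rw [hdil t⁻¹ _ ha', hfix _ ha]
end

section
/- Let α be an action of an Ore semigroup P by unital injective endomorphisms of a unital C*-algebra A, and V : G → B(A) an interaction group on the enveloping group G = P⁻¹P with V|_P = α. If (i,(B,β,F)) is an admissible dilation of V, then β_t ∘ i = i ∘ α_t for all t ∈ P. -/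
variable {B : Type*} [NormedRing B] [StarRing B] [CStarRing B] [NormedAlgebra ℂ B]
  [CompleteSpace B] [PartialOrder B] [StarOrderedRing B]

/-- Let `P` be an Ore semigroup, realized as a submonoid of its enveloping group
`G = P⁻¹P`, let `α` be an action of `P` by unital injective endomorphisms of a unital
C*-algebra `A` and let `V : G → B(A)` be an interaction group with `V|_P = α`.  If
`(i, (B, β, F))` is an admissible dilation of `V`, then `β_t ∘ i = i ∘ α_t` for all
`t ∈ P`. -/
theorem admissible_dilation_intertwines_semigroup_action
    (G : Type*) [Group G] (P : Submonoid G)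
    (henv : ∀ g : G, ∃ r s : G, r ∈ P ∧ s ∈ P ∧ g = r⁻¹ * s)
    (A : Type*) [NormedRing A] [StarRing A] [CStarRing A] [NormedAlgebra ℂ A]
    [CompleteSpace A] [PartialOrder A] [StarOrderedRing A]
    (V : G → A →L[ℂ] A)
    -- `V` is an interaction group:
    (hV1 : V 1 = ContinuousLinearMap.id ℂ A)
    (hV2 : ∀ s t : G, V s⁻¹ ∘L V s ∘L V t = V s⁻¹ ∘L V (s * t))
    (hV3 : ∀ s t : G, V s ∘L V t ∘L V t⁻¹ = V (s * t) ∘L V t⁻¹)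
    (hpos : ∀ (t : G) (a : A), 0 ≤ a → 0 ≤ V t a)
    (hunit : ∀ t : G, V t 1 = 1)
    (hmul : ∀ (t : G) (a b : A),
      (a ∈ Set.range (V t⁻¹) ∨ b ∈ Set.range (V t⁻¹)) → V t (a * b) = V t a * V t b)
    -- `V|_P = α` is an action of `P` by (unital) injective endomorphisms:
    (hinj : ∀ t ∈ P, Function.Injective (V t))
    (hend : ∀ t ∈ P, ∀ a b : A, V t (a * b) = V t a * V t b)
    -- the dilation `(i, (B, β, F))`:
    (i : A →⋆ₐ[ℂ] B) (β : G → B ≃⋆ₐ[ℂ] B) (F : B →L[ℂ] B)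
    (hβ1 : ∀ b : B, β 1 b = b)
    (hβmul : ∀ (s t : G) (b : B), β (s * t) b = β s (β t b))
    (hFcond : IsCondExpOnto F (Set.range F))
    (hdil : ∀ (t : G) (a : A), i (V t a) = F (β t (i a)))
    -- admissibility:
    (hadm1 : ∀ t : G, F (β t (F 1)) = F 1)
    (hadm2 : ∀ (r s : G) (b : B),
      β r (F ((β r).symm (β s (F ((β s).symm b))))) =
        β s (F ((β s).symm (β r (F ((β r).symm b)))))) :
    ∀ t ∈ P, ∀ a : A, β t (i a) = i (V t a) := by
  intro t ht a
  have hV1' : ∀ x : A, V 1 x = x := fun x => by rw [hV1]; rfl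
  -- V t⁻¹ is a left inverse of V t
  have hVti : ∀ x : A, V t⁻¹ (V t x) = x := by
    intro x
    apply hinj t ht
    have h := hV3 t t⁻¹
    rw [inv_inv, mul_inv_cancel] at h
    have h2 := congrArg (fun f : A →L[ℂ] A => f x) h
    simpa [hV1'] using h2
  -- β 1 is the identity, also on symm
  have hβ1symm : ∀ b : B, (β (1 : G)).symm b = b := fun b => by
    conv_lhs => rw [← hβ1 b]
    exact (β (1 : G)).symm_apply_apply b
  -- (β t⁻¹).symm (i a) = β t (i a)
  have hia : i a = β t⁻¹ (β t (i a)) := by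
    rw [← hβmul, inv_mul_cancel, hβ1]
  have hβts : (β t⁻¹).symm (i a) = β t (i a) := by
    conv_lhs => rw [hia]
    exact (β t⁻¹).symm_apply_apply _
  -- F fixes i a
  have hFia : F (i a) = i a := by
    have h := hdil 1 a
    rw [hV1', hβ1] at h
    exact h.symm
  -- key identity from the dilation property
  have key : i a = F (β t⁻¹ (F (β t (i a)))) := by
    have h1 := hdil t⁻¹ (V t a)
    rw [hVti a, hdil t a] at h1
    exact h1
  -- admissibility with r = 1, s = t⁻¹
  have hadm := hadm2 1 t⁻¹ (i a)
  simp only [hβ1, hβ1symm, hFia, hβts] at hadm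
  -- conclude
  have hcen : i a = β t⁻¹ (F (β t (i a))) := key.trans hadm
  calc β t (i a) = β t (β t⁻¹ (F (β t (i a)))) := by rw [← hcen]
    _ = β (t * t⁻¹) (F (β t (i a))) := (hβmul t t⁻¹ _).symm
    _ = F (β t (i a)) := by rw [mul_inv_cancel, hβ1]
    _ = i (V t a) := (hdil t a).symm
end

section
/- With B = C(Z), A = C(X) ⊆ B and quotient map π : Z → X, a linear map F : B → A given by F(b)(x) = ∫_Z b dμ_x for a weak*-continuous μ : X → P(Z) is a conditional expectation onto A if and only if supp(μ_x) ⊆ π⁻¹(x) for all x ∈ X. -/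
open MeasureTheory

/-- The (closed) support of a Borel measure: points all of whose open neighbourhoods have
nonzero measure. -/
def Measure.supp {Z : Type*} [TopologicalSpace Z] [MeasurableSpace Z]
    (m : Measure Z) : Set Z :=
  {z : Z | ∀ U : Set Z, IsOpen U → z ∈ U → m U ≠ 0}

/-- A continuous function on a compact space is integrable w.r.t. any finite measure. -/
lemma integrable_of_continuous_compact {Z : Type*} [TopologicalSpace Z] [CompactSpace Z]
    [MeasurableSpace Z] [OpensMeasurableSpace Z] {m : Measure Z} [IsFiniteMeasure m]
    {f : Z → ℝ} (hf : Continuous f) : Integrable f m := by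
  have hc : HasCompactSupport f :=
    IsCompact.of_isClosed_subset isCompact_univ (isClosed_tsupport f) (Set.subset_univ _)
  exact hf.integrable_of_hasCompactSupport hc

/-- The complement of the support of a regular measure is null. -/
lemma supp_compl_null {Z : Type*} [TopologicalSpace Z] [MeasurableSpace Z]
    (m : Measure Z) [m.Regular] : m (Measure.supp m)ᶜ = 0 := by
  classical
  by_contra h
  have hopen : IsOpen (Measure.supp m)ᶜ := by
    rw [isOpen_iff_forall_mem_open]
    intro z hz
    simp only [Measure.supp, Set.mem_compl_iff, Set.mem_setOf_eq, not_forall] at hz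
    obtain ⟨U, hU, hzU, hmU⟩ := hz
    push_neg at hmU
    refine ⟨U, ?_, hU, hzU⟩
    intro w hw
    simp only [Measure.supp, Set.mem_compl_iff, Set.mem_setOf_eq, not_forall]
    exact ⟨U, hU, hw, by simpa using hmU⟩
  have hpos : (0 : ENNReal) < m (Measure.supp m)ᶜ := pos_iff_ne_zero.2 h
  obtain ⟨K, hKsub, hKcomp, hKpos⟩ :=
    MeasureTheory.Measure.Regular.innerRegular (μ := m) hopen 0 hpos
  -- every point of K has an open null neighbourhood
  have hcover : ∀ z ∈ K, ∃ U : Set Z, IsOpen U ∧ z ∈ U ∧ m U = 0 := by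
    intro z hz
    have hz' := hKsub hz
    simp only [Measure.supp, Set.mem_compl_iff, Set.mem_setOf_eq, not_forall] at hz'
    obtain ⟨U, hU, hzU, hmU⟩ := hz'
    push_neg at hmU
    exact ⟨U, hU, hzU, by simpa using hmU⟩
  choose! U hUopen hUmem hUnull using hcover
  have hKcov : K ⊆ ⋃ z ∈ K, U z := fun z hz => Set.mem_biUnion hz (hUmem z hz)
  obtain ⟨t, ht⟩ := hKcomp.elim_finite_subcover_image (fun z hz => hUopen z hz) hKcov
  obtain ⟨htK, htfin, htsub⟩ := ht
  have hmt : m (⋃ z ∈ t, U z) = 0 := by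
    rw [measure_biUnion_null_iff htfin.countable]
    exact fun z hz => hUnull z (htK hz)
  have : m K = 0 := measure_mono_null htsub hmt
  rw [this] at hKpos
  exact lt_irrefl 0 hKpos

/-- With `B = C(Z)`, `A = C(X) ⊆ B` via the quotient map `π : Z → X`, a linear map
`F : B → A` given by `F(b)(x) = ∫_Z b dμ_x` for a weak*-continuous family `μ : X → P(Z)`
of regular Borel probability measures is a conditional expectation onto `A` if and only
if `supp(μ_x) ⊆ π⁻¹(x)` for all `x ∈ X`. -/
theorem condexp_iff_supported_on_fibers
    (Z : Type*) [TopologicalSpace Z] [CompactSpace Z] [T2Space Z]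
    [MeasurableSpace Z] [BorelSpace Z]
    (X : Type*) [TopologicalSpace X] [CompactSpace X] [T2Space X]
    (π : C(Z, X)) (hπ : Function.Surjective π)
    -- `π` is the quotient map identifying `z ∼ z′` iff `a(z) = a(z′)` for all `a ∈ A`:
    (hquot : ∀ z z' : Z, π z = π z' ↔ ∀ a : C(X, ℝ), a (π z) = a (π z'))
    (μ : X → ProbabilityMeasure Z) (hμc : Continuous μ)
    (hreg : ∀ x : X, (μ x : Measure Z).Regular)
    (F : C(Z, ℝ) →ₗ[ℝ] C(X, ℝ))
    (hF : ∀ (b : C(Z, ℝ)) (x : X), F b x = ∫ z, b z ∂(μ x : Measure Z)) :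
    -- `F` is a conditional expectation onto `A = {a ∘ π : a ∈ C(X)}` ...
    ((∀ b : C(Z, ℝ), 0 ≤ b → 0 ≤ F b) ∧
     (∀ a : C(X, ℝ), F (a.comp π) = a) ∧
     (∀ (a : C(X, ℝ)) (b : C(Z, ℝ)), F (a.comp π * b) = a * F b)) ↔
    -- ... iff each `μ_x` is supported in the fiber `π⁻¹(x)`:
    (∀ x : X, Measure.supp (μ x : Measure Z) ⊆ π ⁻¹' {x}) := by
  constructor
  · rintro ⟨-, hmod, -⟩ x z hz
    by_contra hne
    have hne' : π z ≠ x := by simpa using hne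
    -- Urysohn: a continuous `f : X → ℝ` with `f x = 0`, `f (π z) = 1`, `0 ≤ f ≤ 1`.
    obtain ⟨f, hf0, hf1, hf01⟩ :=
      exists_continuous_zero_one_of_isClosed (X := X) (s := {x}) (t := {π z})
        isClosed_singleton isClosed_singleton (Set.disjoint_singleton.2 hne'.symm)
    -- the integral of `f ∘ π` against `μ x` is `f x = 0`
    have hzero : ∫ w, f (π w) ∂(μ x : Measure Z) = 0 := by
      have := hF (f.comp π) x
      simp only [ContinuousMap.comp_apply] at this
      rw [← this, hmod f]
      exact hf0 rfl
    have hint : Integrable (fun w => f (π w)) (μ x : Measure Z) :=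
      integrable_of_continuous_compact (f.continuous.comp π.continuous)
    have hnn : 0 ≤ fun w => f (π w) := fun w => (hf01 (π w)).1
    have hae : (fun w => f (π w)) =ᵐ[(μ x : Measure Z)] 0 :=
      (integral_eq_zero_iff_of_nonneg hnn hint).1 hzero
    -- but `f ∘ π` is `1` near `z`, an open set of positive measure
    set V : Set Z := (fun w => f (π w)) ⁻¹' Set.Ioi (1 / 2 : ℝ) with hV
    have hVopen : IsOpen V := (isOpen_Ioi).preimage (f.continuous.comp π.continuous)
    have hzV : z ∈ V := by
      simp only [hV, Set.mem_preimage, Set.mem_Ioi]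
      rw [show f (π z) = 1 from hf1 rfl]
      norm_num
    have hVnull : (μ x : Measure Z) V = 0 := by
      rw [Filter.EventuallyEq, ae_iff] at hae
      refine measure_mono_null ?_ hae
      intro w hw
      have hw2 : (1 / 2 : ℝ) < f (π w) := hw
      show ¬ f (π w) = (0 : Z → ℝ) w
      simp only [Pi.zero_apply]
      exact ne_of_gt (lt_trans (by norm_num) hw2)
    exact hz V hVopen hzV hVnull
  · intro hsupp
    -- first: a.e. `π w = x` under `μ x`
    have hae : ∀ x : X, ∀ᵐ w ∂(μ x : Measure Z), π w = x := by
      intro x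
      haveI := hreg x
      have h0 := supp_compl_null (μ x : Measure Z)
      refine measure_mono_null ?_ h0
      intro w hw
      simp only [Set.mem_setOf_eq] at hw
      intro hws
      exact hw (hsupp x hws)
    refine ⟨?_, ?_, ?_⟩
    · intro b hb
      rw [ContinuousMap.le_def]
      intro x
      simp only [ContinuousMap.zero_apply]
      rw [hF]
      exact integral_nonneg fun w => by simpa using (ContinuousMap.le_def.1 hb) w
    · intro a
      ext x
      rw [hF]
      have : ∫ w, a (π w) ∂(μ x : Measure Z) = ∫ _, a x ∂(μ x : Measure Z) := by
        refine integral_congr_ae ?_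
        filter_upwards [hae x] with w hw
        rw [hw]
      simp only [ContinuousMap.comp_apply]
      rw [this, integral_const]
      simp
    · intro a b
      ext x
      rw [hF, ContinuousMap.mul_apply, hF]
      have : ∫ w, (a.comp π * b) w ∂(μ x : Measure Z)
          = ∫ w, a x * b w ∂(μ x : Measure Z) := by
        refine integral_congr_ae ?_
        filter_upwards [hae x] with w hw
        simp [hw]
      rw [this, integral_const_mul]
end

section
/- Let F : C(Z) → C(X) be the conditional expectation determined by the weak*-continuous family μ : X → P(Z) with supp(μ_x) ⊆ π⁻¹(x). Then F is faithful (F(b*b) = 0 ⇒ b = 0) if and only if the interior of the set Z_μ := {z ∈ Z : z ∉ supp(μ_{π(z)})} is empty. In particular, if supp(μ_x) = π⁻¹(x) for all x, then F is faithful. -/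
/-!
A nonnegative continuous function has zero `μ_x`-integral exactly when it vanishes on
`supp μ_x`; regularity is what makes the complement of the support null. Since
`supp μ_x ⊆ π⁻¹(x)`, the union of the supports is `S = {z | z ∈ supp μ_{π z}} = Z_μᶜ`, so
`F (b * b) = 0` says precisely that `b` vanishes on `S`. In a completely regular space the
only continuous function vanishing on `S` is `0` iff `S` is dense, i.e. iff `interior Z_μ = ∅`.
-/

open MeasureTheory

open Set

namespace Measure

variable {Z : Type*} [TopologicalSpace Z] [MeasurableSpace Z]

theorem notMem_supp_iff {m : Measure Z} {z : Z} :
    z ∉ supp m ↔ ∃ U, IsOpen U ∧ z ∈ U ∧ m U = 0 := by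
  simp [supp]

theorem isOpen_compl_supp (m : Measure Z) : IsOpen (supp m)ᶜ :=
  isOpen_iff_forall_mem_open.mpr fun _ hz ↦
    let ⟨U, hU, hzU, hmU⟩ := notMem_supp_iff.mp hz
    ⟨U, fun _ hw ↦ notMem_supp_iff.mpr ⟨U, hU, hw, hmU⟩, hU, hzU⟩

theorem ae_mem_supp {m : Measure Z} (hm : m.InnerRegularWRT IsCompact IsOpen) :
    ∀ᵐ z ∂m, z ∈ supp m := by
  change m (supp m)ᶜ = 0
  rw [hm.measure_eq_iSup (isOpen_compl_supp m)]
  refine ENNReal.iSup_eq_zero.mpr fun K ↦ ENNReal.iSup_eq_zero.mpr fun hK ↦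
    ENNReal.iSup_eq_zero.mpr fun hKc ↦ hKc.measure_zero_of_nhdsWithin fun z hz ↦ ?_
  obtain ⟨U, hU, hzU, hmU⟩ := notMem_supp_iff.mp (hK hz)
  exact ⟨U, mem_nhdsWithin_of_mem_nhds (hU.mem_nhds hzU), hmU⟩

theorem eqOn_supp_of_ae_eq {Y : Type*} [TopologicalSpace Y] [T2Space Y] {m : Measure Z}
    {f g : Z → Y} (hf : Continuous f) (hg : Continuous g) (hfg : f =ᵐ[m] g) :
    EqOn f g (supp m) := fun z hz ↦ by
  by_contra hne
  exact hz _ (isOpen_ne_fun hf hg) hne (ae_iff.mp hfg)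

theorem integral_eq_zero_iff_eqOn_supp [CompactSpace Z] [OpensMeasurableSpace Z]
    {m : Measure Z} [IsFiniteMeasure m] (hm : m.InnerRegularWRT IsCompact IsOpen)
    {g : Z → ℝ} (hg : Continuous g) (hg0 : 0 ≤ g) :
    ∫ z, g z ∂m = 0 ↔ EqOn g 0 (supp m) := by
  rw [integral_eq_zero_iff_of_nonneg hg0
    (hg.integrable_of_hasCompactSupport (HasCompactSupport.of_compactSpace g))]
  refine ⟨eqOn_supp_of_ae_eq hg continuous_const, fun h ↦ ?_⟩
  filter_upwards [ae_mem_supp hm] using h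

theorem iUnion_supp_eq_setOf_mem_supp {X : Type*} (π : Z → X) (μ : X → Measure Z)
    (hsupp : ∀ x, supp (μ x) ⊆ π ⁻¹' {x}) :
    ⋃ x, supp (μ x) = {z | z ∈ supp (μ (π z))} := by
  ext z
  refine ⟨fun hz ↦ ?_, fun hz ↦ mem_iUnion.mpr ⟨π z, hz⟩⟩
  obtain ⟨x, hzx⟩ := mem_iUnion.mp hz
  rwa [mem_ofPred_eq, hsupp x hzx]

theorem forall_integral_mul_self_eq_zero_iff [CompactSpace Z] [OpensMeasurableSpace Z]
    {X : Type*} (π : Z → X) (μ : X → Measure Z) [∀ x, IsFiniteMeasure (μ x)]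
    (hμ : ∀ x, (μ x).InnerRegularWRT IsCompact IsOpen) (hsupp : ∀ x, supp (μ x) ⊆ π ⁻¹' {x})
    (b : C(Z, ℝ)) :
    (∀ x, ∫ z, b z * b z ∂μ x = 0) ↔ EqOn b 0 {z | z ∈ supp (μ (π z))} := by
  have hfiber : ∀ x, ∫ z, b z * b z ∂μ x = 0 ↔ EqOn b 0 (supp (μ x)) := fun x ↦ by
    rw [integral_eq_zero_iff_eqOn_supp (hμ x) (by fun_prop) fun z ↦ mul_self_nonneg (b z)]
    simp [EqOn]
  simp only [← iUnion_supp_eq_setOf_mem_supp π μ hsupp, hfiber, EqOn, mem_iUnion,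
    forall_exists_index]
  exact forall_comm

end Measure

theorem dense_iff_forall_eqOn_zero_imp_eq_zero {Z : Type*} [TopologicalSpace Z]
    [CompletelyRegularSpace Z] {S : Set Z} :
    Dense S ↔ ∀ b : C(Z, ℝ), EqOn b 0 S → b = 0 := by
  refine ⟨fun hS b hb ↦ ContinuousMap.coe_injective (b.continuous.ext_on hS continuous_const hb),
    fun h ↦ ?_⟩
  by_contra hS
  obtain ⟨z₀, hz₀⟩ := not_forall.mp hS
  obtain ⟨f, hf, hfz₀, hfS⟩ :=
    CompletelyRegularSpace.completely_regular z₀ _ isClosed_closure hz₀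
  let b : C(Z, ℝ) := ⟨fun z ↦ 1 - f z, by fun_prop⟩
  have hb : b = 0 := h b fun z hz ↦ by simp [b, hfS (subset_closure hz)]
  simpa [b, hfz₀] using DFunLike.congr_fun hb z₀

theorem condexp_faithful_iff_general
    (Z : Type*) [TopologicalSpace Z] [CompactSpace Z] [T2Space Z]
    [MeasurableSpace Z] [BorelSpace Z]
    (X : Type*) [TopologicalSpace X]
    (π : C(Z, X))
    (μ : X → ProbabilityMeasure Z)
    (hreg : ∀ x : X, (μ x : Measure Z).Regular)
    (hsupp : ∀ x : X, Measure.supp (μ x : Measure Z) ⊆ π ⁻¹' {x})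
    (F : C(Z, ℝ) →ₗ[ℝ] C(X, ℝ))
    (hF : ∀ (b : C(Z, ℝ)) (x : X), F b x = ∫ z, b z ∂(μ x : Measure Z)) :
    ((∀ b : C(Z, ℝ), F (b * b) = 0 → b = 0) ↔
      interior {z : Z | z ∉ Measure.supp (μ (π z) : Measure Z)} = ∅) ∧
    ((∀ x : X, Measure.supp (μ x : Measure Z) = π ⁻¹' {x}) →
      ∀ b : C(Z, ℝ), F (b * b) = 0 → b = 0) := by
  set S := {z : Z | z ∈ Measure.supp (μ (π z) : Measure Z)}
  have hF0 (b : C(Z, ℝ)) : F (b * b) = 0 ↔ EqOn b 0 S := by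
    simpa [ContinuousMap.ext_iff, hF] using
      Measure.forall_integral_mul_self_eq_zero_iff π (fun x ↦ (μ x : Measure Z))
        (fun x ↦ (hreg x).innerRegular) hsupp b
  have hfaithful : (∀ b : C(Z, ℝ), F (b * b) = 0 → b = 0) ↔ Dense S := by
    simp_rw [hF0]
    exact dense_iff_forall_eqOn_zero_imp_eq_zero.symm
  have hinterior : interior {z : Z | z ∉ Measure.supp (μ (π z) : Measure Z)} = ∅ ↔ Dense S := by
    rw [interior_eq_empty_iff_dense_compl, compl_ofPred]
    simp only [not_not, S]
  refine ⟨hfaithful.trans hinterior.symm, fun hfull ↦ hfaithful.mpr ?_⟩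
  convert dense_univ
  ext z
  simp [S, hfull]

/-- Let `F : C(Z) → C(X)` be the conditional expectation determined by the
weak*-continuous family `μ : X → P(Z)` of regular Borel probability measures with
`supp(μ_x) ⊆ π⁻¹(x)`.  Then `F` is faithful iff the interior of
`Z_μ := {z ∈ Z : z ∉ supp(μ_{π(z)})}` is empty.  In particular, if
`supp(μ_x) = π⁻¹(x)` for all `x`, then `F` is faithful. -/
theorem condexp_faithful_iff
    (Z : Type*) [TopologicalSpace Z] [CompactSpace Z] [T2Space Z]
    [MeasurableSpace Z] [BorelSpace Z]
    (X : Type*) [TopologicalSpace X] [CompactSpace X] [T2Space X]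
    (π : C(Z, X)) (hπ : Function.Surjective π)
    (hquot : ∀ z z' : Z, π z = π z' ↔ ∀ a : C(X, ℝ), a (π z) = a (π z'))
    (μ : X → ProbabilityMeasure Z) (hμc : Continuous μ)
    (hreg : ∀ x : X, (μ x : Measure Z).Regular)
    (hsupp : ∀ x : X, Measure.supp (μ x : Measure Z) ⊆ π ⁻¹' {x})
    (F : C(Z, ℝ) →ₗ[ℝ] C(X, ℝ))
    (hF : ∀ (b : C(Z, ℝ)) (x : X), F b x = ∫ z, b z ∂(μ x : Measure Z)) :
    ((∀ b : C(Z, ℝ), F (b * b) = 0 → b = 0) ↔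
      interior {z : Z | z ∉ Measure.supp (μ (π z) : Measure Z)} = ∅) ∧
    ((∀ x : X, Measure.supp (μ x : Measure Z) = π ⁻¹' {x}) →
      ∀ b : C(Z, ℝ), F (b * b) = 0 → b = 0) :=
  condexp_faithful_iff_general Z X π μ hreg hsupp F hF
end

section
/- Suppose the quotient map π : Z → X between compact Hausdorff spaces is a covering map (so fibers are finite). Then a linear map F : C(Z) → C(X) is an onto conditional expectation if and only if there is a continuous ω : Z → [0,1] with Σ_{z ∈ π⁻¹(x)} ω(z) = 1 for all x and F(b)(x) = Σ_{z ∈ π⁻¹(x)} ω(z) b(z); such ω is unique, and F is faithful iff ω⁻¹(0) is nowhere dense in Z. -/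
/-!
A conditional expectation `F` onto `C(X)` only sees the values of `b` on each fibre: the module
property kills every `b` vanishing near `π⁻¹(x)`, and positivity, which makes `F` contractive,
extends this to every `b` vanishing on `π⁻¹(x)`. A covering map is locally injective, so each
`z₀` has a function `β` equal to `1` at `z` and to `0` on the rest of the fibre of `z`, for every
`z` near `z₀` at once. Hence `F b x = ∑_{π z = x} ω z * b z` with `ω z = F β (π z)`, which is
locally the continuous function `F β ∘ π`.
-/

open Set Filter Topology

section

variable {Z X : Type*}

def IsFiberPeak (π : Z → X) (z : Z) (b : Z → ℝ) : Prop :=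
  b z = 1 ∧ ∀ w, π w = π z → w ≠ z → b w = 0

namespace IsFiberPeak

variable {π : Z → X} {z : Z} {b : Z → ℝ}

theorem mul_self (hb : IsFiberPeak π z b) : IsFiberPeak π z (b * b) :=
  ⟨by simp [hb.1], fun w hw hwz => by simp [hb.2 w hw hwz]⟩

theorem finsum_mul (hb : IsFiberPeak π z b) (ν : Z → ℝ) :
    ∑ᶠ w ∈ π ⁻¹' {π z}, ν w * b w = ν z := by
  rw [finsum_mem_def, finsum_eq_single _ z]
  · simp [hb.1]
  · intro w hwz
    by_cases hw : π w = π z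
    · simp [hb.2 w hw hwz]
    · simp [hw]

end IsFiberPeak

theorem le_one_of_finsum_eq_one {π : Z → X} {ω : Z → ℝ}
    (hfin : ∀ x, (π ⁻¹' {x}).Finite) (hω : ∀ z, 0 ≤ ω z)
    (hsum : ∀ x, ∑ᶠ z ∈ π ⁻¹' {x}, ω z = 1) (z : Z) : ω z ≤ 1 := by
  rw [← hsum (π z), finsum_mem_eq_finite_toFinset_sum _ (hfin _)]
  exact Finset.single_le_sum (fun w _ => hω w) ((hfin _).mem_toFinset.mpr rfl)

variable [TopologicalSpace Z]

theorem IsClosed.isNowhereDense_iff_forall_eqOn_compl [NormalSpace Z] [T1Space Z] {C : Set Z}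
    (hC : IsClosed C) : IsNowhereDense C ↔ ∀ b : C(Z, ℝ), EqOn b 0 Cᶜ → b = 0 := by
  rw [hC.isNowhereDense_iff]
  constructor
  · intro hC b hb
    exact DFunLike.coe_injective <| Continuous.ext_on
      (interior_eq_empty_iff_dense_compl.mp hC) b.continuous continuous_const hb
  · intro h
    by_contra hne
    obtain ⟨z, hz⟩ := nonempty_iff_ne_empty.mpr hne
    obtain ⟨b, hb0, hb1, -⟩ := exists_continuous_zero_one_of_isClosed
      isOpen_interior.isClosed_compl isClosed_singleton
      (disjoint_singleton_right.mpr (not_not_intro hz))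
    have hbz : b z = 1 := hb1 rfl
    rw [h b (hb0.mono (compl_subset_compl.mpr interior_subset))] at hbz
    exact zero_ne_one hbz

theorem IsLocallyInjective.exists_isFiberPeak [NormalSpace Z] [T1Space Z] {π : Z → X}
    (hπ : IsLocallyInjective π) (z₀ : Z) : ∃ b : C(Z, ℝ), ∀ᶠ z in 𝓝 z₀, IsFiberPeak π z b := by
  obtain ⟨S, hSo, hz₀S, hinj⟩ := hπ z₀
  obtain ⟨U, hUo, hz₀U, hUS⟩ :=
    normal_exists_closure_subset isClosed_singleton hSo (singleton_subset_iff.mpr hz₀S)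
  obtain ⟨b, hb0, hb1, -⟩ := exists_continuous_zero_one_of_isClosed hSo.isClosed_compl
    isClosed_closure (disjoint_compl_left_iff_subset.mpr hUS)
  refine ⟨b, eventually_of_mem (hUo.mem_nhds (hz₀U rfl)) fun z hz => ⟨hb1 (subset_closure hz), ?_⟩⟩
  intro w hw hwz
  exact hb0 fun hwS => hwz (hinj hwS (hUS (subset_closure hz)) hw)

variable [TopologicalSpace X]

theorem IsCoveringMap.finite_preimage_singleton [CompactSpace Z] [T1Space X] {π : Z → X}
    (hπ : IsCoveringMap π) (x : X) : (π ⁻¹' {x}).Finite :=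
  (isClosed_singleton.preimage hπ.continuous).isCompact.finite
    (isDiscrete_iff_discreteTopology.mpr (hπ x).discreteTopology_fiber)

/-- Conditional expectation onto `C(X)`, embedded in `C(Z)` by composition with `π`. -/
structure IsConditionalExpectation (π : C(Z, X)) (F : C(Z, ℝ) →ₗ[ℝ] C(X, ℝ)) : Prop where
  nonneg : ∀ b, 0 ≤ b → 0 ≤ F b
  map_comp : ∀ a : C(X, ℝ), F (a.comp π) = a
  map_comp_mul : ∀ a b, F (a.comp π * b) = a * F b

namespace IsConditionalExpectation

variable {π : C(Z, X)} {F : C(Z, ℝ) →ₗ[ℝ] C(X, ℝ)}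

theorem mono (hF : IsConditionalExpectation π F) {b b' : C(Z, ℝ)} (h : b ≤ b') : F b ≤ F b' :=
  sub_nonneg.mp (by simpa only [map_sub] using hF.nonneg _ (sub_nonneg.mpr h))

theorem map_const (hF : IsConditionalExpectation π F) (c : ℝ) :
    F (ContinuousMap.const Z c) = ContinuousMap.const X c :=
  hF.map_comp (.const X c)

theorem abs_apply_le_norm [CompactSpace Z] (hF : IsConditionalExpectation π F) (b : C(Z, ℝ))
    (x : X) : |F b x| ≤ ‖b‖ := by
  have hb w : |b w| ≤ ‖b‖ := b.norm_coe_le_norm w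
  have hlow := hF.mono (b := .const Z (-‖b‖)) (b' := b) fun w => (abs_le.mp (hb w)).1
  have hup := hF.mono (b := b) (b' := .const Z ‖b‖) fun w => (abs_le.mp (hb w)).2
  rw [hF.map_const] at hlow hup
  exact abs_le.mpr ⟨hlow x, hup x⟩

theorem map_one (hF : IsConditionalExpectation π F) : F 1 = 1 := hF.map_comp 1

variable [CompactSpace Z] [T2Space X] [NormalSpace X]

theorem apply_eq_zero_of_eventuallyEq_zero (hF : IsConditionalExpectation π F) {g : C(Z, ℝ)}
    {x : X} (hg : g =ᶠ[𝓝ˢ (π ⁻¹' {x})] 0) : F g x = 0 := by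
  obtain ⟨V, hVo, hxV, hgV⟩ := eventually_nhdsSet_iff_exists.mp hg
  have hC : IsClosed (π '' Vᶜ) := (hVo.isClosed_compl.isCompact.image π.continuous).isClosed
  have hxC : x ∉ π '' Vᶜ := by
    rintro ⟨w, hw, rfl⟩
    exact hw (hxV rfl)
  obtain ⟨a, ha0, ha1, -⟩ := exists_continuous_zero_one_of_isClosed hC isClosed_singleton
    (disjoint_singleton_right.mpr hxC)
  have hag : a.comp π * g = 0 := by
    ext w
    by_cases hw : w ∈ V
    · simp [hgV w hw]
    · simp [ha0 (mem_image_of_mem π hw)]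
  simpa [hag, ha1 rfl] using congrArg (· x) (hF.map_comp_mul a g).symm

theorem apply_eq_zero_of_eqOn_zero (hF : IsConditionalExpectation π F) {g : C(Z, ℝ)} {x : X}
    (hg : EqOn g 0 (π ⁻¹' {x})) : F g x = 0 := by
  refine abs_nonpos_iff.mp (le_of_forall_pos_le_add fun ε hε => ?_)
  -- `c` is `g` clipped to `[-ε, ε]`: it is `ε`-small, and `g - c` vanishes where `|g| < ε`,
  -- a neighbourhood of the fibre
  let c : C(Z, ℝ) := ⟨fun w => max (-ε) (min ε (g w)), by fun_prop⟩
  have hc : ‖c‖ ≤ ε := (c.norm_le hε.le).mpr fun w =>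
    abs_le.mpr ⟨le_max_left _ _, max_le (by linarith) (min_le_left _ _)⟩
  have hgc : g - c =ᶠ[𝓝ˢ (π ⁻¹' {x})] 0 := by
    have hopen : IsOpen {w | |g w| < ε} := isOpen_lt (by fun_prop) continuous_const
    filter_upwards [hopen.mem_nhdsSet.mpr fun w hw => by simp [hg hw, hε]] with w hw
    obtain ⟨h₁, h₂⟩ := abs_lt.mp hw
    simp [c, min_eq_right h₂.le, max_eq_right h₁.le]
  have hFgc := hF.apply_eq_zero_of_eventuallyEq_zero hgc
  rw [map_sub, ContinuousMap.sub_apply, sub_eq_zero] at hFgc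
  rw [zero_add, hFgc]
  exact (hF.abs_apply_le_norm c x).trans hc

theorem apply_eq_of_eqOn (hF : IsConditionalExpectation π F) {g g' : C(Z, ℝ)} {x : X}
    (h : EqOn g g' (π ⁻¹' {x})) : F g x = F g' x := by
  rw [← sub_eq_zero, ← ContinuousMap.sub_apply, ← map_sub]
  exact hF.apply_eq_zero_of_eqOn_zero fun w hw => sub_eq_zero.mpr (h hw)

theorem apply_eq_finsum (hF : IsConditionalExpectation π F) {x : X} (hfin : (π ⁻¹' {x}).Finite)
    {β : Z → C(Z, ℝ)} (hβ : ∀ z ∈ π ⁻¹' {x}, IsFiberPeak π z (β z)) (b : C(Z, ℝ)) :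
    F b x = ∑ᶠ z ∈ π ⁻¹' {x}, F (β z) (π z) * b z := by
  have hagree : EqOn b ⇑(∑ z ∈ hfin.toFinset, b z • β z) (π ⁻¹' {x}) := by
    intro w hw
    simp only [ContinuousMap.coe_sum, Finset.sum_apply, ContinuousMap.coe_smul, Pi.smul_apply,
      smul_eq_mul]
    rw [Finset.sum_eq_single_of_mem w (hfin.mem_toFinset.mpr hw), (hβ w hw).1, mul_one]
    intro z hz hzw
    have hzx : π z = x := hfin.mem_toFinset.mp hz
    rw [(hβ z hzx).2 w (hw.trans hzx.symm) hzw.symm, mul_zero]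
  rw [hF.apply_eq_of_eqOn hagree, finsum_mem_eq_finite_toFinset_sum _ hfin]
  simp only [map_sum, map_smul, ContinuousMap.coe_sum, Finset.sum_apply, ContinuousMap.coe_smul,
    Pi.smul_apply, smul_eq_mul]
  refine Finset.sum_congr rfl fun z hz => ?_
  rw [show π z = x from hfin.mem_toFinset.mp hz, mul_comm]

end IsConditionalExpectation

section FiberSum

variable {F : C(Z, ℝ) →ₗ[ℝ] C(X, ℝ)} {ω : Z → ℝ}

theorem nonneg_of_apply_eq_finsum {π : Z → X} (hF : ∀ b, 0 ≤ b → 0 ≤ F b)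
    (hpeak : ∀ z, ∃ b : C(Z, ℝ), IsFiberPeak π z b)
    (hrep : ∀ b x, F b x = ∑ᶠ z ∈ π ⁻¹' {x}, ω z * b z) (z : Z) : 0 ≤ ω z := by
  obtain ⟨b, hb⟩ := hpeak z
  rw [← hb.mul_self.finsum_mul ω]
  simpa [hrep] using hF (b * b) (fun w => mul_self_nonneg (b w)) (π z)

theorem eq_of_apply_eq_finsum {π : Z → X} {ω' : Z → ℝ}
    (hpeak : ∀ z, ∃ b : C(Z, ℝ), IsFiberPeak π z b)
    (hrep : ∀ b x, F b x = ∑ᶠ z ∈ π ⁻¹' {x}, ω z * b z)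
    (hrep' : ∀ b x, F b x = ∑ᶠ z ∈ π ⁻¹' {x}, ω' z * b z) : ω = ω' := by
  funext z
  obtain ⟨b, hb⟩ := hpeak z
  rw [← hb.finsum_mul ω, ← hrep, hrep', hb.finsum_mul]

theorem apply_mul_self_eq_zero_iff {π : Z → X} (hfin : ∀ x, (π ⁻¹' {x}).Finite)
    (hω : ∀ z, 0 ≤ ω z)
    (hrep : ∀ b x, F b x = ∑ᶠ z ∈ π ⁻¹' {x}, ω z * b z) (b : C(Z, ℝ)) :
    F (b * b) = 0 ↔ EqOn b 0 (ω ⁻¹' {0})ᶜ := by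
  have hterm z : 0 ≤ ω z * (b z * b z) := mul_nonneg (hω z) (mul_self_nonneg _)
  have hfiber x : F (b * b) x = 0 ↔ ∀ z, π z = x → ω z * (b z * b z) = 0 := by
    rw [hrep, finsum_mem_eq_finite_toFinset_sum _ (hfin x)]
    simp only [ContinuousMap.mul_apply]
    rw [Finset.sum_eq_zero_iff_of_nonneg fun z _ => hterm z]
    simp
  simp only [ContinuousMap.ext_iff, ContinuousMap.zero_apply, hfiber, EqOn, mem_compl_iff,
    mem_preimage, mem_singleton_iff, Pi.zero_apply, mul_eq_zero, or_self]
  exact ⟨fun h z hz => (h _ z rfl).resolve_left hz,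
    fun h _ z _ => or_iff_not_imp_left.mpr fun hz => h hz⟩

theorem isConditionalExpectation_of_apply_eq_finsum {π : C(Z, X)} (hω : ∀ z, 0 ≤ ω z)
    (hsum : ∀ x, ∑ᶠ z ∈ π ⁻¹' {x}, ω z = 1)
    (hrep : ∀ b x, F b x = ∑ᶠ z ∈ π ⁻¹' {x}, ω z * b z) : IsConditionalExpectation π F where
  nonneg b hb := ContinuousMap.le_def.mpr fun x => by
    rw [ContinuousMap.zero_apply, hrep]
    exact finsum_nonneg fun z => finsum_nonneg fun _ => mul_nonneg (hω z) (hb z)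
  map_comp a := by
    ext x
    have hfiber : ∀ z ∈ π ⁻¹' {x}, ω z * a.comp π z = ω z * a x := fun z hz => by
      rw [ContinuousMap.comp_apply, show π z = x from hz]
    rw [hrep, finsum_mem_congr rfl hfiber, ← finsum_mem_mul, hsum, one_mul]
  map_comp_mul a b := by
    ext x
    rw [ContinuousMap.mul_apply, hrep, hrep, mul_finsum_mem]
    refine finsum_mem_congr rfl fun z hz => ?_
    rw [ContinuousMap.mul_apply, ContinuousMap.comp_apply, show π z = x from hz]
    ring

end FiberSum

theorem IsConditionalExpectation.exists_finsum_rep [CompactSpace Z] [T2Space Z] [T2Space X]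
    [NormalSpace X] {π : C(Z, X)} {F : C(Z, ℝ) →ₗ[ℝ] C(X, ℝ)} (hF : IsConditionalExpectation π F)
    (hπ : IsCoveringMap π) :
    ∃ ω : Z → ℝ, Continuous ω ∧ (∀ z : Z, ω z ∈ Icc (0 : ℝ) 1) ∧
      (∀ x : X, ∑ᶠ z ∈ π ⁻¹' {x}, ω z = 1) ∧
      (∀ (b : C(Z, ℝ)) (x : X), F b x = ∑ᶠ z ∈ π ⁻¹' {x}, ω z * b z) := by
  have hfin := hπ.finite_preimage_singleton
  choose β hβ using hπ.isLocalHomeomorph.isLocallyInjective.exists_isFiberPeak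
  have hpeak z : IsFiberPeak π z (β z) := (hβ z).self_of_nhds
  let ω z := F (β z) (π z)
  have hrep b x : F b x = ∑ᶠ z ∈ π ⁻¹' {x}, ω z * b z :=
    hF.apply_eq_finsum (hfin x) (fun z _ => hpeak z) b
  have hsum x : ∑ᶠ z ∈ π ⁻¹' {x}, ω z = 1 := by
    simpa [hF.map_one] using (hrep 1 x).symm
  have hω := nonneg_of_apply_eq_finsum hF.nonneg (fun z => ⟨β z, hpeak z⟩) hrep
  refine ⟨ω, continuous_iff_continuousAt.mpr fun z₀ => ?_,
    fun z => ⟨hω z, le_one_of_finsum_eq_one hfin hω hsum z⟩, hsum, hrep⟩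
  refine ((F (β z₀)).continuous.comp π.continuous).continuousAt.congr ?_
  filter_upwards [hβ z₀] with z hz
  rw [Function.comp_apply, hrep, hz.finsum_mul]

end

theorem condexp_iff_cocycle_of_covering_general
    (Z : Type*) [TopologicalSpace Z] [CompactSpace Z] [T2Space Z]
    (X : Type*) [TopologicalSpace X] [CompactSpace X] [T2Space X]
    (π : Z → X) (hcov : IsCoveringMap π)
    (F : C(Z, ℝ) →ₗ[ℝ] C(X, ℝ)) :
    -- `F` is an onto conditional expectation iff it is given by a continuous cocycle `ω`:
    (((∀ b : C(Z, ℝ), 0 ≤ b → 0 ≤ F b) ∧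
      (∀ a : C(X, ℝ), F (a.comp ⟨π, hcov.continuous⟩) = a) ∧
      (∀ (a : C(X, ℝ)) (b : C(Z, ℝ)), F (a.comp ⟨π, hcov.continuous⟩ * b) = a * F b)) ↔
      (∃ ω : Z → ℝ, Continuous ω ∧ (∀ z : Z, ω z ∈ Set.Icc (0 : ℝ) 1) ∧
        (∀ x : X, ∑ᶠ z ∈ π ⁻¹' {x}, ω z = 1) ∧
        (∀ (b : C(Z, ℝ)) (x : X), F b x = ∑ᶠ z ∈ π ⁻¹' {x}, ω z * b z))) ∧
    -- the cocycle `ω` is unique: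
    (∀ ω ω' : Z → ℝ,
      (Continuous ω ∧ (∀ z : Z, ω z ∈ Set.Icc (0 : ℝ) 1) ∧
        (∀ x : X, ∑ᶠ z ∈ π ⁻¹' {x}, ω z = 1) ∧
        (∀ (b : C(Z, ℝ)) (x : X), F b x = ∑ᶠ z ∈ π ⁻¹' {x}, ω z * b z)) →
      (Continuous ω' ∧ (∀ z : Z, ω' z ∈ Set.Icc (0 : ℝ) 1) ∧
        (∀ x : X, ∑ᶠ z ∈ π ⁻¹' {x}, ω' z = 1) ∧
        (∀ (b : C(Z, ℝ)) (x : X), F b x = ∑ᶠ z ∈ π ⁻¹' {x}, ω' z * b z)) →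
      ω = ω') ∧
    -- `F` is faithful iff `ω⁻¹(0)` is nowhere dense:
    (∀ ω : Z → ℝ,
      (Continuous ω ∧ (∀ z : Z, ω z ∈ Set.Icc (0 : ℝ) 1) ∧
        (∀ x : X, ∑ᶠ z ∈ π ⁻¹' {x}, ω z = 1) ∧
        (∀ (b : C(Z, ℝ)) (x : X), F b x = ∑ᶠ z ∈ π ⁻¹' {x}, ω z * b z)) →
      ((∀ b : C(Z, ℝ), F (b * b) = 0 → b = 0) ↔ IsNowhereDense (ω ⁻¹' {0}))) := by
  have hfin := hcov.finite_preimage_singleton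
  have hpeak z : ∃ b : C(Z, ℝ), IsFiberPeak π z b :=
    (hcov.isLocalHomeomorph.isLocallyInjective.exists_isFiberPeak z).imp fun _ h => h.self_of_nhds
  refine ⟨⟨fun ⟨hpos, hunit, hmod⟩ => IsConditionalExpectation.exists_finsum_rep
    (π := ⟨π, hcov.continuous⟩) ⟨hpos, hunit, hmod⟩ hcov, ?_⟩, ?_, ?_⟩
  · rintro ⟨ω, -, hω, hsum, hrep⟩
    obtain ⟨hpos, hunit, hmod⟩ := isConditionalExpectation_of_apply_eq_finsum
      (π := ⟨π, hcov.continuous⟩) (fun z => (hω z).1) hsum hrep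
    exact ⟨hpos, hunit, hmod⟩
  · rintro ω ω' ⟨-, -, -, hrep⟩ ⟨-, -, -, hrep'⟩
    exact eq_of_apply_eq_finsum hpeak hrep hrep'
  · rintro ω ⟨hωc, hω, -, hrep⟩
    rw [(isClosed_singleton.preimage hωc).isNowhereDense_iff_forall_eqOn_compl]
    exact forall_congr' fun b => by rw [apply_mul_self_eq_zero_iff hfin (fun z => (hω z).1) hrep]

/-- Suppose the quotient map `π : Z → X` between compact Hausdorff spaces is a covering
map.  A linear map `F : C(Z) → C(X)` is an onto conditional expectation iff there is a
continuous `ω : Z → [0,1]` with `Σ_{z ∈ π⁻¹(x)} ω(z) = 1` and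
`F(b)(x) = Σ_{z ∈ π⁻¹(x)} ω(z) b(z)`; such `ω` is unique, and `F` is faithful iff
`ω⁻¹(0)` is nowhere dense in `Z`. -/
theorem condexp_iff_cocycle_of_covering
    (Z : Type*) [TopologicalSpace Z] [CompactSpace Z] [T2Space Z]
    (X : Type*) [TopologicalSpace X] [CompactSpace X] [T2Space X]
    (π : Z → X) (hcov : IsCoveringMap π) (hπ : Function.Surjective π)
    (hquot : ∀ z z' : Z, π z = π z' ↔ ∀ a : C(X, ℝ), a (π z) = a (π z'))
    (F : C(Z, ℝ) →ₗ[ℝ] C(X, ℝ)) :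
    -- `F` is an onto conditional expectation iff it is given by a continuous cocycle `ω`:
    (((∀ b : C(Z, ℝ), 0 ≤ b → 0 ≤ F b) ∧
      (∀ a : C(X, ℝ), F (a.comp ⟨π, hcov.continuous⟩) = a) ∧
      (∀ (a : C(X, ℝ)) (b : C(Z, ℝ)), F (a.comp ⟨π, hcov.continuous⟩ * b) = a * F b)) ↔
      (∃ ω : Z → ℝ, Continuous ω ∧ (∀ z : Z, ω z ∈ Set.Icc (0 : ℝ) 1) ∧
        (∀ x : X, ∑ᶠ z ∈ π ⁻¹' {x}, ω z = 1) ∧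
        (∀ (b : C(Z, ℝ)) (x : X), F b x = ∑ᶠ z ∈ π ⁻¹' {x}, ω z * b z))) ∧
    -- the cocycle `ω` is unique:
    (∀ ω ω' : Z → ℝ,
      (Continuous ω ∧ (∀ z : Z, ω z ∈ Set.Icc (0 : ℝ) 1) ∧
        (∀ x : X, ∑ᶠ z ∈ π ⁻¹' {x}, ω z = 1) ∧
        (∀ (b : C(Z, ℝ)) (x : X), F b x = ∑ᶠ z ∈ π ⁻¹' {x}, ω z * b z)) →
      (Continuous ω' ∧ (∀ z : Z, ω' z ∈ Set.Icc (0 : ℝ) 1) ∧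
        (∀ x : X, ∑ᶠ z ∈ π ⁻¹' {x}, ω' z = 1) ∧
        (∀ (b : C(Z, ℝ)) (x : X), F b x = ∑ᶠ z ∈ π ⁻¹' {x}, ω' z * b z)) →
      ω = ω') ∧
    -- `F` is faithful iff `ω⁻¹(0)` is nowhere dense:
    (∀ ω : Z → ℝ,
      (Continuous ω ∧ (∀ z : Z, ω z ∈ Set.Icc (0 : ℝ) 1) ∧
        (∀ x : X, ∑ᶠ z ∈ π ⁻¹' {x}, ω z = 1) ∧
        (∀ (b : C(Z, ℝ)) (x : X), F b x = ∑ᶠ z ∈ π ⁻¹' {x}, ω z * b z)) →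
      ((∀ b : C(Z, ℝ), F (b * b) = 0 → b = 0) ↔ IsNowhereDense (ω ⁻¹' {0}))) :=
  condexp_iff_cocycle_of_covering_general Z X π hcov F
end
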